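/- arXiv:2506.03333 — 5 statements merged into one kernel-verified Lean document; each statement's English description precedes it below -/
import Mathlib

section
/- Let μ be a Borel probability measure on ℝ with finite first moment, let F be its CDF and let F⁻¹(τ) = inf{x ∈ ℝ : F(x) ≥ τ} be its quantile function. For each m ≥ 1 set τ_i = (2i−1)/(2m) for i = 1,…,m. Then the average of the τ-quantiles converges to the mean of μ as m → ∞: lim_{m→∞} (1/m) ∑_{i=1}^m F⁻¹((2i−1)/(2m)) = ∫_ℝ x dμ(x). -/
open MeasureTheory Filter

open Set ProbabilityTheory

lemma qa_mem (μ : Measure ℝ) [IsProbabilityMeasure μ] {τ : ℝ} (hτ : τ ∈ Set.Ioo (0:ℝ) 1) :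
    τ ≤ cdf μ (sInf {y : ℝ | τ ≤ cdf μ y}) := by
  set S := {y : ℝ | τ ≤ cdf μ y} with hS
  have hne : S.Nonempty := by
    have := (tendsto_cdf_atTop μ).eventually_const_le hτ.2
    rcases this.exists with ⟨y, hy⟩; exact ⟨y, hy⟩
  have hbdd : BddBelow S := by
    have := (tendsto_cdf_atBot μ).eventually_lt_const hτ.1
    rcases eventually_atBot.mp this with ⟨y, hy⟩
    refine ⟨y, fun s hs => ?_⟩
    by_contra h
    push_neg at h
    exact absurd hs (not_le.2 (lt_of_le_of_lt (monotone_cdf μ h.le) (hy y le_rfl)))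
  obtain ⟨u, -, hu_tendsto, hu_mem⟩ := exists_seq_tendsto_sInf hne hbdd
  have hmem : ∀ n, u n ∈ S := hu_mem
  have hge : ∀ n, sInf S ≤ u n := fun n => csInf_le hbdd (hmem n)
  have hcont : ContinuousWithinAt (cdf μ) (Set.Ici (sInf S)) (sInf S) :=
    (cdf μ).right_continuous _
  have : Tendsto (fun n => cdf μ (u n)) atTop (nhds (cdf μ (sInf S))) :=
    hcont.tendsto.comp (tendsto_nhdsWithin_of_tendsto_nhds_of_eventually_within u hu_tendsto
      (Eventually.of_forall hge))
  exact ge_of_tendsto this (Eventually.of_forall fun n => hmem n)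

lemma qa_galois (μ : Measure ℝ) [IsProbabilityMeasure μ] {τ : ℝ} (hτ : τ ∈ Set.Ioo (0:ℝ) 1)
    (x : ℝ) : sInf {y : ℝ | τ ≤ cdf μ y} ≤ x ↔ τ ≤ cdf μ x := by
  constructor
  · intro h
    exact le_trans (qa_mem μ hτ) (monotone_cdf μ h)
  · intro h
    have hbdd : BddBelow {y : ℝ | τ ≤ cdf μ y} := by
      have := (tendsto_cdf_atBot μ).eventually_lt_const hτ.1
      rcases eventually_atBot.mp this with ⟨y, hy⟩
      refine ⟨y, fun s hs => ?_⟩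
      by_contra hc
      push_neg at hc
      exact absurd hs (not_le.2 (lt_of_le_of_lt (monotone_cdf μ hc.le) (hy y le_rfl)))
    exact csInf_le hbdd h

noncomputable def qaG (μ : Measure ℝ) : ℝ → ℝ :=
  fun τ => if τ ∈ Set.Ioo (0:ℝ) 1 then sInf {y : ℝ | τ ≤ cdf μ y} else 0

lemma qaG_preimage (μ : Measure ℝ) [IsProbabilityMeasure μ] (x : ℝ) :
    qaG μ ⁻¹' (Iic x) =
      (Ioo (0:ℝ) 1 ∩ Iic (cdf μ x)) ∪ ((Ioo (0:ℝ) 1)ᶜ ∩ {τ : ℝ | (0:ℝ) ≤ x}) := by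
  ext τ
  simp only [qaG, mem_preimage, mem_Iic, mem_union, mem_inter_iff, mem_compl_iff, mem_setOf_eq]
  by_cases hτ : τ ∈ Ioo (0:ℝ) 1
  · simp only [hτ, if_pos, qa_galois μ hτ x]
    tauto
  · simp only [hτ, if_neg, not_false_iff]
    tauto

lemma qaG_measurable (μ : Measure ℝ) [IsProbabilityMeasure μ] : Measurable (qaG μ) := by
  apply measurable_of_Iic
  intro x
  rw [qaG_preimage]
  apply MeasurableSet.union
  · exact (measurableSet_Ioo.inter measurableSet_Iic)
  · by_cases h : (0:ℝ) ≤ x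
    · have : {τ : ℝ | (0:ℝ) ≤ x} = univ := by simp [h]
      rw [this, inter_univ]
      exact measurableSet_Ioo.compl
    · have : {τ : ℝ | (0:ℝ) ≤ x} = ∅ := by simp [h]
      rw [this, inter_empty]
      exact MeasurableSet.empty

lemma qaG_monotoneOn (μ : Measure ℝ) [IsProbabilityMeasure μ] :
    MonotoneOn (qaG μ) (Ioo (0:ℝ) 1) := by
  intro a ha b hb hab
  simp only [qaG, if_pos ha, if_pos hb]
  exact (qa_galois μ ha _).mpr (le_trans hab (qa_mem μ hb))

lemma qa_vol (c : ℝ) (h0 : 0 ≤ c) (h1 : c ≤ 1) :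
    volume (Ioo (0:ℝ) 1 ∩ Iic c) = ENNReal.ofReal c := by
  rcases eq_or_lt_of_le h1 with h | h
  · have : Ioo (0:ℝ) 1 ∩ Iic c = Ioo (0:ℝ) 1 := by
      rw [inter_eq_left]; intro τ hτ; exact le_of_lt (h ▸ hτ.2)
    rw [this, Real.volume_Ioo, h]; norm_num
  · have : Ioo (0:ℝ) 1 ∩ Iic c = Ioc (0:ℝ) c := by
      ext τ; simp only [mem_inter_iff, mem_Ioo, mem_Iic, mem_Ioc]
      constructor
      · rintro ⟨⟨h1, h2⟩, h3⟩; exact ⟨h1, h3⟩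
      · rintro ⟨h1, h2⟩; exact ⟨⟨h1, lt_of_le_of_lt h2 h⟩, h2⟩
    rw [this, Real.volume_Ioc, sub_zero]

lemma qaG_map (μ : Measure ℝ) [IsProbabilityMeasure μ] :
    Measure.map (qaG μ) (volume.restrict (Ioo (0:ℝ) 1)) = μ := by
  refine (MeasureTheory.Measure.ext_of_Iic μ _ fun a => ?_).symm
  rw [Measure.map_apply (qaG_measurable μ) measurableSet_Iic,
    Measure.restrict_apply ((qaG_measurable μ) measurableSet_Iic), qaG_preimage]
  have : ((Ioo (0:ℝ) 1 ∩ Iic (cdf μ a)) ∪ ((Ioo (0:ℝ) 1)ᶜ ∩ {τ : ℝ | (0:ℝ) ≤ a})) ∩ Ioo (0:ℝ) 1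
      = Ioo (0:ℝ) 1 ∩ Iic (cdf μ a) := by
    ext τ
    simp only [mem_inter_iff, mem_union, mem_compl_iff, mem_setOf_eq, mem_Iic]
    tauto
  rw [this, qa_vol _ (cdf_nonneg μ a) (cdf_le_one μ a), ofReal_cdf]

instance qa_prob : IsProbabilityMeasure (volume.restrict (Ioo (0:ℝ) 1)) :=
  ⟨by rw [Measure.restrict_apply_univ, Real.volume_Ioo]; norm_num⟩

lemma qa_ae_mem (s : Set ℝ) (hs : MeasurableSet s) :
    ∀ᵐ τ ∂((volume.restrict (Ioo (0:ℝ) 1)).restrict s), τ ∈ s ∩ Ioo (0:ℝ) 1 := by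
  rw [Measure.restrict_restrict hs]
  exact ae_restrict_mem (hs.inter measurableSet_Ioo)

lemma qa_setIntegral_le {g : ℝ → ℝ} (hg : Integrable g (volume.restrict (Ioo (0:ℝ) 1)))
    {s : Set ℝ} (hs : MeasurableSet s) {c : ℝ}
    (hsc : ∀ τ ∈ s ∩ Ioo (0:ℝ) 1, g τ ≤ c) :
    ∫ τ in s, g τ ∂(volume.restrict (Ioo (0:ℝ) 1)) ≤
      ((volume.restrict (Ioo (0:ℝ) 1)) s).toReal * c := by
  have h1 : ∫ τ in s, g τ ∂(volume.restrict (Ioo (0:ℝ) 1)) ≤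
      ∫ _ in s, c ∂(volume.restrict (Ioo (0:ℝ) 1)) := by
    refine setIntegral_mono_ae_restrict hg.integrableOn (integrable_const _) ?_
    exact (qa_ae_mem s hs).mono fun τ hτ => hsc τ hτ
  calc _ ≤ _ := h1
    _ = _ := by rw [setIntegral_const, smul_eq_mul]; rfl

lemma qa_setIntegral_ge {g : ℝ → ℝ} (hg : Integrable g (volume.restrict (Ioo (0:ℝ) 1)))
    {s : Set ℝ} (hs : MeasurableSet s) {c : ℝ}
    (hsc : ∀ τ ∈ s ∩ Ioo (0:ℝ) 1, c ≤ g τ) :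
    ((volume.restrict (Ioo (0:ℝ) 1)) s).toReal * c ≤
      ∫ τ in s, g τ ∂(volume.restrict (Ioo (0:ℝ) 1)) := by
  have h1 : ∫ _ in s, c ∂(volume.restrict (Ioo (0:ℝ) 1)) ≤
      ∫ τ in s, g τ ∂(volume.restrict (Ioo (0:ℝ) 1)) := by
    refine setIntegral_mono_ae_restrict (integrable_const _) hg.integrableOn ?_
    exact (qa_ae_mem s hs).mono fun τ hτ => hsc τ hτ
  calc _ = ∫ _ in s, c ∂(volume.restrict (Ioo (0:ℝ) 1)) := by
        rw [setIntegral_const, smul_eq_mul]; rfl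
    _ ≤ _ := h1

lemma qa_rho_Iic {c : ℝ} (hc : c ∈ Ioo (0:ℝ) 1) :
    ((volume.restrict (Ioo (0:ℝ) 1)) (Iic c)).toReal = c := by
  rw [Measure.restrict_apply measurableSet_Iic, inter_comm,
    qa_vol c hc.1.le hc.2.le, ENNReal.toReal_ofReal hc.1.le]

lemma qa_rho_Ioc {a b : ℝ} (ha : 0 < a) (hab : a ≤ b) (hb : b < 1) :
    ((volume.restrict (Ioo (0:ℝ) 1)) (Ioc a b)).toReal = b - a := by
  rw [Measure.restrict_apply measurableSet_Ioc]
  have : Ioc a b ∩ Ioo (0:ℝ) 1 = Ioc a b := by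
    rw [inter_eq_left]
    intro τ hτ
    exact ⟨lt_trans ha hτ.1, lt_of_le_of_lt hτ.2 hb⟩
  rw [this, Real.volume_Ioc, ENNReal.toReal_ofReal (by linarith)]

lemma qa_rho_Ioi {c : ℝ} (hc : c ∈ Ioo (0:ℝ) 1) :
    ((volume.restrict (Ioo (0:ℝ) 1)) (Ioi c)).toReal = 1 - c := by
  rw [Measure.restrict_apply measurableSet_Ioi]
  have : Ioi c ∩ Ioo (0:ℝ) 1 = Ioo c 1 := by
    ext τ
    simp only [mem_inter_iff, mem_Ioi, mem_Ioo]
    constructor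
    · rintro ⟨h1, _, h3⟩; exact ⟨h1, h3⟩
    · rintro ⟨h1, h2⟩; exact ⟨h1, lt_trans hc.1 h1, h2⟩
  rw [this, Real.volume_Ioo, ENNReal.toReal_ofReal (by linarith [hc.2])]

lemma qa_add_Ioc {g : ℝ → ℝ} (hg : Integrable g (volume.restrict (Ioo (0:ℝ) 1)))
    {a b : ℝ} (hab : a ≤ b) :
    ∫ τ in Iic b, g τ ∂(volume.restrict (Ioo (0:ℝ) 1)) =
      (∫ τ in Iic a, g τ ∂(volume.restrict (Ioo (0:ℝ) 1))) +
      ∫ τ in Ioc a b, g τ ∂(volume.restrict (Ioo (0:ℝ) 1)) := by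
  rw [← setIntegral_union (Iic_disjoint_Ioc le_rfl) measurableSet_Ioc
    hg.integrableOn hg.integrableOn, Iic_union_Ioc_eq_Iic hab]

lemma qa_add_Ioi {g : ℝ → ℝ} (hg : Integrable g (volume.restrict (Ioo (0:ℝ) 1))) (c : ℝ) :
    ∫ τ, g τ ∂(volume.restrict (Ioo (0:ℝ) 1)) =
      (∫ τ in Iic c, g τ ∂(volume.restrict (Ioo (0:ℝ) 1))) +
      ∫ τ in Ioi c, g τ ∂(volume.restrict (Ioo (0:ℝ) 1)) := by
  rw [← setIntegral_union (Iic_disjoint_Ioi le_rfl) measurableSet_Ioi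
    hg.integrableOn hg.integrableOn, Iic_union_Ioi, setIntegral_univ]

lemma qa_tail0 {g : ℝ → ℝ} (hgm : Measurable g)
    (hg : Integrable g (volume.restrict (Ioo (0:ℝ) 1)))
    {δ : ℕ → ℝ} (hδ : Tendsto δ atTop (nhds 0)) :
    Tendsto (fun n => ∫ τ in Iic (δ n), g τ ∂(volume.restrict (Ioo (0:ℝ) 1)))
      atTop (nhds 0) := by
  have key : Tendsto (fun n => ∫ τ in Iic (δ n), g τ ∂(volume.restrict (Ioo (0:ℝ) 1)))
      atTop (nhds (∫ _, (0:ℝ) ∂(volume.restrict (Ioo (0:ℝ) 1)))) := by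
    simp_rw [← integral_indicator measurableSet_Iic]
    refine tendsto_integral_of_dominated_convergence (fun τ => ‖g τ‖)
      (fun n => (hgm.aestronglyMeasurable).indicator measurableSet_Iic) hg.norm
      (fun n => Eventually.of_forall fun τ => norm_indicator_le_norm_self g τ) ?_
    filter_upwards [ae_restrict_mem measurableSet_Ioo] with τ hτ
    refine Tendsto.congr' ?_ tendsto_const_nhds
    filter_upwards [hδ.eventually_lt_const hτ.1] with n hn
    exact (indicator_of_notMem (by simpa using not_le.2 hn) g).symm
  simpa using key

lemma qa_tail1 {g : ℝ → ℝ} (hgm : Measurable g)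
    (hg : Integrable g (volume.restrict (Ioo (0:ℝ) 1)))
    {δ : ℕ → ℝ} (hδ : Tendsto δ atTop (nhds 0)) :
    Tendsto (fun n => ∫ τ in Iic (1 - δ n), g τ ∂(volume.restrict (Ioo (0:ℝ) 1)))
      atTop (nhds (∫ τ, g τ ∂(volume.restrict (Ioo (0:ℝ) 1)))) := by
  simp_rw [← integral_indicator measurableSet_Iic]
  refine tendsto_integral_of_dominated_convergence (fun τ => ‖g τ‖)
    (fun n => (hgm.aestronglyMeasurable).indicator measurableSet_Iic) hg.norm
    (fun n => Eventually.of_forall fun τ => norm_indicator_le_norm_self g τ) ?_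
  filter_upwards [ae_restrict_mem measurableSet_Ioo] with τ hτ
  refine Tendsto.congr' ?_ tendsto_const_nhds
  filter_upwards [hδ.eventually_lt_const (by linarith [hτ.2] : (0:ℝ) < 1 - τ)] with n hn
  exact (indicator_of_mem (by simp only [mem_Iic]; linarith) g).symm

/-- The average of the quantiles `F⁻¹((2i−1)/(2m))`, `i = 1,…,m`, of a Borel probability
measure `μ` on `ℝ` with finite first moment converges to the mean `∫ x ∂μ` as `m → ∞`. -/
theorem quantile_average_tendsto_mean
    (μ : Measure ℝ) [IsProbabilityMeasure μ]
    (hint : Integrable (fun x : ℝ => x) μ)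
    (F : ℝ → ℝ) (hF : F = fun x => (μ (Set.Iic x)).toReal)
    (Finv : ℝ → ℝ) (hFinv : ∀ τ : ℝ, Finv τ = sInf {x : ℝ | τ ≤ F x}) :
    Tendsto
      (fun m : ℕ =>
        (1 / (m : ℝ)) * ∑ i ∈ Finset.range m, Finv ((2 * (i : ℝ) + 1) / (2 * m)))
      atTop (nhds (∫ x, x ∂μ)) := by
  have hFc : F = fun x => (cdf μ) x := by
    funext x; rw [hF]; exact (cdf_eq_real μ x).symm
  have hgm := qaG_measurable μ
  have hmono := qaG_monotoneOn μ
  have hmap := qaG_map μ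
  set ρ := volume.restrict (Ioo (0:ℝ) 1) with hρ
  have hgint : Integrable (qaG μ) ρ := by
    have h1 : Integrable (fun x : ℝ => x) (Measure.map (qaG μ) ρ) := by
      rw [hmap]; exact hint
    exact (integrable_map_measure measurable_id.aestronglyMeasurable
      hgm.aemeasurable).mp h1
  have hIeq : ∫ x, x ∂μ = ∫ τ, qaG μ τ ∂ρ := by
    conv_lhs => rw [← hmap]
    exact integral_map hgm.aemeasurable measurable_id.aestronglyMeasurable
  rw [hIeq]
  set A : ℝ → ℝ := fun c => ∫ τ in Iic c, qaG μ τ ∂ρ with hA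
  set I := ∫ τ, qaG μ τ ∂ρ with hI
  set δ : ℕ → ℝ := fun n => 1 / (2 * ((n:ℝ) + 1)) with hδdef
  have hδ0 : Tendsto δ atTop (nhds 0) := by
    have h1 : Tendsto (fun n : ℕ => 2 * ((n:ℝ) + 1)) atTop atTop := by
      apply Tendsto.const_mul_atTop two_pos
      exact tendsto_atTop_add_const_right _ 1 tendsto_natCast_atTop_atTop
    have h2 := h1.inv_tendsto_atTop
    rw [hδdef]
    simp only [one_div]
    exact h2
  rw [← tendsto_add_atTop_iff_nat 1]
  have key : ∀ n : ℕ,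
      A (δ n) + A (1 - δ n) ≤
        (1 / (((n+1:ℕ)) : ℝ)) * ∑ i ∈ Finset.range (n+1),
          Finv ((2 * (i : ℝ) + 1) / (2 * (((n+1:ℕ)) : ℝ)))
      ∧ (1 / (((n+1:ℕ)) : ℝ)) * ∑ i ∈ Finset.range (n+1),
          Finv ((2 * (i : ℝ) + 1) / (2 * (((n+1:ℕ)) : ℝ))) ≤
        2 * I - A (δ n) - A (1 - δ n) := by
    intro n
    have hmrpos : (0:ℝ) < (n:ℝ) + 1 := by positivity
    set mr : ℝ := (n:ℝ) + 1 with hmr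
    have hcast : (((n+1:ℕ)) : ℝ) = mr := by rw [hmr]; push_cast; ring
    set cc : ℕ → ℝ := fun i => (2 * (i:ℝ) + 1) / (2 * mr) with hcc
    have hmem : ∀ i ≤ n, cc i ∈ Ioo (0:ℝ) 1 := by
      intro i hi
      constructor
      · apply div_pos (by positivity) (by positivity)
      · rw [div_lt_one (by positivity)]
        have : (i:ℝ) ≤ (n:ℝ) := Nat.cast_le.mpr hi
        rw [hmr]; linarith
    have hcc0 : cc 0 = δ n := by
      simp only [hcc, hδdef, hmr]; norm_num
    have hccn : cc n = 1 - δ n := by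
      simp only [hcc, hδdef, hmr]
      field_simp
      ring
    have hFg : ∀ i ≤ n, Finv (cc i) = qaG μ (cc i) := by
      intro i hi
      rw [hFinv, hFc, qaG, if_pos (hmem i hi)]
    have hsum : (1 / (((n+1:ℕ)) : ℝ)) * ∑ i ∈ Finset.range (n+1),
        Finv ((2 * (i : ℝ) + 1) / (2 * (((n+1:ℕ)) : ℝ)))
        = ∑ i ∈ Finset.range (n+1), (1/mr) * qaG μ (cc i) := by
      rw [hcast, Finset.mul_sum]
      refine Finset.sum_congr rfl fun i hi => ?_
      rw [Finset.mem_range] at hi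
      congr 1
      exact hFg i (Nat.lt_succ_iff.mp hi)
    have hAstep : ∀ i < n, A (cc (i+1)) - A (cc i) ≤ (1/mr) * qaG μ (cc (i+1)) ∧
        (1/mr) * qaG μ (cc i) ≤ A (cc (i+1)) - A (cc i) := by
      intro i hi
      have hi1 : cc i ∈ Ioo (0:ℝ) 1 := hmem i (le_of_lt hi)
      have hi2 : cc (i+1) ∈ Ioo (0:ℝ) 1 := hmem (i+1) (Nat.succ_le_of_lt hi)
      have hle : cc i ≤ cc (i+1) := by
        simp only [hcc]
        rw [div_le_div_iff_of_pos_right (by positivity)]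
        push_cast; linarith
      have heq : A (cc (i+1)) = A (cc i) + ∫ τ in Ioc (cc i) (cc (i+1)), qaG μ τ ∂ρ :=
        qa_add_Ioc hgint hle
      have hrho : ((ρ (Ioc (cc i) (cc (i+1))))).toReal = cc (i+1) - cc i :=
        qa_rho_Ioc hi1.1 hle hi2.2
      have hdiff : cc (i+1) - cc i = 1/mr := by
        simp only [hcc]
        rw [div_sub_div_same, div_eq_div_iff (by positivity) (by positivity)]
        push_cast; ring
      constructor
      · have h1 := qa_setIntegral_le hgint (s := Ioc (cc i) (cc (i+1))) measurableSet_Ioc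
          (c := qaG μ (cc (i+1))) (fun τ hτ => hmono hτ.2 hi2 hτ.1.2)
        rw [hrho, hdiff] at h1
        linarith
      · have h1 := qa_setIntegral_ge hgint (s := Ioc (cc i) (cc (i+1))) measurableSet_Ioc
          (c := qaG μ (cc i)) (fun τ hτ => hmono hi1 hτ.2 (le_of_lt hτ.1.1))
        rw [hrho, hdiff] at h1
        linarith
    have hA0 : 2 * A (cc 0) ≤ (1/mr) * qaG μ (cc 0) := by
      have h1 := qa_setIntegral_le hgint (s := Iic (cc 0)) measurableSet_Iic
        (c := qaG μ (cc 0)) (fun τ hτ => hmono hτ.2 (hmem 0 (Nat.zero_le n)) hτ.1)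
      rw [qa_rho_Iic (hmem 0 (Nat.zero_le n))] at h1
      have h2 : cc 0 = 1/(2*mr) := by simp only [hcc]; norm_num
      have h4 : 2 * (cc 0 * qaG μ (cc 0)) = 1/mr * qaG μ (cc 0) := by
        rw [h2]; field_simp
      linarith [h1, h4]
    have hAn : (1/mr) * qaG μ (cc n) ≤ 2 * (I - A (cc n)) := by
      have heq : I = A (cc n) + ∫ τ in Ioi (cc n), qaG μ τ ∂ρ := qa_add_Ioi hgint (cc n)
      have h1 := qa_setIntegral_ge hgint (s := Ioi (cc n)) measurableSet_Ioi
        (c := qaG μ (cc n)) (fun τ hτ => hmono (hmem n le_rfl) hτ.2 (le_of_lt hτ.1))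
      rw [qa_rho_Ioi (hmem n le_rfl)] at h1
      have h4 : 2 * ((1 - cc n) * qaG μ (cc n)) = 1/mr * qaG μ (cc n) := by
        have h2 : 1 - cc n = 1/(2*mr) := by
          rw [hccn]; simp only [hδdef]; rw [hmr]; ring
        rw [h2]; field_simp
      linarith [h1, h4]
    have e1 : A (δ n) = A (cc 0) := by rw [hcc0]
    have e2 : A (1 - δ n) = A (cc n) := by rw [hccn]
    constructor
    · rw [hsum, Finset.sum_range_succ', e1, e2]
      have hsumle : ∑ i ∈ Finset.range n, (A (cc (i+1)) - A (cc i)) ≤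
          ∑ i ∈ Finset.range n, (1/mr) * qaG μ (cc (i+1)) :=
        Finset.sum_le_sum fun i hi => (hAstep i (Finset.mem_range.mp hi)).1
      rw [Finset.sum_range_sub (fun i => A (cc i))] at hsumle
      linarith
    · rw [hsum, Finset.sum_range_succ, e1, e2]
      have hsumle : ∑ i ∈ Finset.range n, (1/mr) * qaG μ (cc i) ≤
          ∑ i ∈ Finset.range n, (A (cc (i+1)) - A (cc i)) :=
        Finset.sum_le_sum fun i hi => (hAstep i (Finset.mem_range.mp hi)).2
      rw [Finset.sum_range_sub (fun i => A (cc i))] at hsumle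
      linarith
  have hlow : Tendsto (fun n => A (δ n) + A (1 - δ n)) atTop (nhds I) := by
    have h := (qa_tail0 hgm hgint hδ0).add (qa_tail1 hgm hgint hδ0)
    rw [zero_add] at h
    exact h
  have hup : Tendsto (fun n => 2 * I - A (δ n) - A (1 - δ n)) atTop (nhds I) := by
    have h := ((tendsto_const_nhds (x := 2*I) (f := atTop)).sub
      (qa_tail0 hgm hgint hδ0)).sub (qa_tail1 hgm hgint hδ0)
    have h2 : 2*I - 0 - I = I := by ring
    rw [h2] at h
    exact h
  exact tendsto_of_tendsto_of_tendsto_of_le_of_le hlow hup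
    (fun n => (key n).1) (fun n => (key n).2)
end

section
/- Let μ be a Borel probability measure on ℝ with finite first moment, CDF F and quantile function F⁻¹(τ) = inf{x : F(x) ≥ τ}. For each m ≥ 1 and i = 1,…,m set τ_i^{(m)} = (2i−1)/(2m), and suppose {θ^{(m)}_{i,t}}_{t≥0} are real sequences (e.g. sample paths of quantile estimates) such that θ^{(m)}_{i,t} → F⁻¹(τ_i^{(m)}) as t → ∞ for every i and m. Define the average-reward estimates R̄^{(m)}_t = (1/m) ∑_{i=1}^m θ^{(m)}_{i,t}. Then lim_{m→∞} lim_{t→∞} R̄^{(m)}_t = ∫_ℝ x dμ(x), i.e. the average-reward estimates converge to the average-reward r̄ of the limiting per-step reward distribution. -/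
open MeasureTheory Filter

section AuxQuantile
open Set ProbabilityTheory

lemma quantile_galois (μ : Measure ℝ) [IsProbabilityMeasure μ]
    (F : ℝ → ℝ) (hF : F = fun x => (μ (Set.Iic x)).toReal)
    (Finv : ℝ → ℝ) (hFinv : ∀ τ : ℝ, Finv τ = sInf {x : ℝ | τ ≤ F x}) :
    ∀ τ ∈ Ioo (0:ℝ) 1, ∀ x : ℝ, Finv τ ≤ x ↔ τ ≤ F x := by
  have hFc : F = ⇑(cdf μ) := by
    rw [hF]; ext x; exact (cdf_eq_real μ x).symm
  have hmono : Monotone F := hFc ▸ monotone_cdf μ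
  rintro τ ⟨hτ0, hτ1⟩ x
  set S : Set ℝ := {x : ℝ | τ ≤ F x} with hS
  have hne : S.Nonempty := by
    obtain ⟨x, hx⟩ := ((hFc ▸ tendsto_cdf_atTop μ).eventually
      (eventually_ge_nhds hτ1)).exists
    exact ⟨x, hx⟩
  have hbdd : BddBelow S := by
    obtain ⟨y, hy⟩ := ((hFc ▸ tendsto_cdf_atBot μ).eventually
      (eventually_lt_nhds hτ0)).exists
    refine ⟨y, fun z hz => ?_⟩
    by_contra h
    push_neg at h
    exact absurd hz (not_le.mpr ((hmono h.le).trans_lt hy))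
  have hmem : τ ≤ F (sInf S) := by
    have hrc : Tendsto F (nhdsWithin (sInf S) (Ici (sInf S))) (nhds (F (sInf S))) := by
      rw [hFc]; exact (cdf μ).right_continuous (sInf S)
    have hfreq : ∃ᶠ z in nhdsWithin (sInf S) (Ici (sInf S)), F z ∈ Ici τ := by
      rw [frequently_iff]
      intro U hU
      obtain ⟨u, hu, hsub⟩ := mem_nhdsGE_iff_exists_Ico_subset.mp hU
      obtain ⟨z, hzS, hzu⟩ := (csInf_lt_iff hbdd hne).mp hu
      exact ⟨z, hsub ⟨csInf_le hbdd hzS, hzu⟩, hzS⟩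
    exact isClosed_Ici.mem_of_frequently_of_tendsto hfreq hrc
  constructor
  · intro h
    exact hmem.trans (hmono ((hFinv τ) ▸ h))
  · intro h
    rw [hFinv]
    exact csInf_le hbdd h

lemma quantile_mono (F : ℝ → ℝ) (Finv : ℝ → ℝ)
    (hgal : ∀ τ ∈ Ioo (0:ℝ) 1, ∀ x : ℝ, Finv τ ≤ x ↔ τ ≤ F x) :
    MonotoneOn Finv (Ioo (0:ℝ) 1) := by
  intro a ha b hb hab
  exact (hgal a ha (Finv b)).mpr (hab.trans ((hgal b hb (Finv b)).mp le_rfl))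

lemma quantile_map (μ : Measure ℝ) [IsProbabilityMeasure μ]
    (F : ℝ → ℝ) (hF : F = fun x => (μ (Set.Iic x)).toReal)
    (Finv : ℝ → ℝ)
    (hgal : ∀ τ ∈ Ioo (0:ℝ) 1, ∀ x : ℝ, Finv τ ≤ x ↔ τ ≤ F x) :
    Measure.map Finv (volume.restrict (Ioo (0:ℝ) 1)) = μ := by
  have hmono := quantile_mono F Finv hgal
  have hmeas : AEMeasurable Finv (volume.restrict (Ioo (0:ℝ) 1)) :=
    aemeasurable_restrict_of_monotoneOn measurableSet_Ioo hmono
  have hprob : IsProbabilityMeasure (volume.restrict (Ioo (0:ℝ) 1)) := by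
    constructor
    simp [Real.volume_Ioo]
  have : IsProbabilityMeasure (Measure.map Finv (volume.restrict (Ioo (0:ℝ) 1))) :=
    Measure.isProbabilityMeasure_map hmeas
  refine Measure.ext_of_Iic _ _ (fun x => ?_)
  rw [Measure.map_apply_of_aemeasurable hmeas measurableSet_Iic,
    Measure.restrict_apply' measurableSet_Ioo]
  have hset : Finv ⁻¹' Iic x ∩ Ioo (0:ℝ) 1 = Iic (F x) ∩ Ioo (0:ℝ) 1 := by
    ext τ
    simp only [mem_inter_iff, mem_preimage, mem_Iic]
    constructor
    · rintro ⟨h1, h2⟩; exact ⟨(hgal τ h2 x).mp h1, h2⟩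
    · rintro ⟨h1, h2⟩; exact ⟨(hgal τ h2 x).mpr h1, h2⟩
  rw [hset]
  have hF0 : 0 ≤ F x := by rw [hF]; exact ENNReal.toReal_nonneg
  have hF1 : F x ≤ 1 := by
    rw [hF]
    exact ENNReal.toReal_le_of_le_ofReal one_pos.le (by simpa using prob_le_one)
  have hμx : μ (Iic x) = ENNReal.ofReal (F x) := by
    rw [hF, ENNReal.ofReal_toReal (measure_ne_top μ _)]
  rcases lt_or_eq_of_le hF1 with h1 | h1
  · have : Iic (F x) ∩ Ioo (0:ℝ) 1 = Ioc 0 (F x) := by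
      ext τ
      simp only [mem_inter_iff, mem_Iic, mem_Ioo, mem_Ioc]
      constructor
      · rintro ⟨h, h2, h3⟩; exact ⟨h2, h⟩
      · rintro ⟨h2, h⟩; exact ⟨h, h2, h.trans_lt h1⟩
    rw [this, Real.volume_Ioc, hμx, sub_zero]
  · have : Iic (F x) ∩ Ioo (0:ℝ) 1 = Ioo 0 1 := by
      rw [inter_eq_right]
      intro τ hτ
      rw [mem_Iic, h1]
      exact hτ.2.le
    rw [this, Real.volume_Ioo, hμx, h1, sub_zero]

lemma tendsto_int_indicator (g f : ℝ → ℝ) (hInt : IntegrableOn g (Ioo (0:ℝ) 1))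
    (s : ℕ → Set ℝ) (hs : ∀ m, MeasurableSet (s m)) (hsub : ∀ m, s m ⊆ Ioo (0:ℝ) 1)
    (hptw : ∀ τ ∈ Ioo (0:ℝ) 1,
      Tendsto (fun m => (s m).indicator g τ) atTop (nhds (f τ))) :
    Tendsto (fun m => ∫ τ in s m, g τ) atTop (nhds (∫ τ in Ioo (0:ℝ) 1, f τ)) := by
  have heq : ∀ m, ∫ τ in s m, g τ = ∫ τ in Ioo (0:ℝ) 1, (s m).indicator g τ := by
    intro m
    rw [setIntegral_indicator (hs m), inter_eq_right.mpr (hsub m)]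
  simp only [heq]
  exact tendsto_integral_of_dominated_convergence (fun τ => ‖g τ‖)
    (fun m => hInt.1.indicator (hs m))
    hInt.norm
    (fun m => Eventually.of_forall (fun τ => norm_indicator_le_norm_self g τ))
    ((ae_restrict_mem measurableSet_Ioo).mono hptw)

lemma riemann_midpoint (g : ℝ → ℝ) (hmono : MonotoneOn g (Ioo (0:ℝ) 1))
    (hInt : IntegrableOn g (Ioo (0:ℝ) 1)) :
    Tendsto (fun m : ℕ => (1/(m:ℝ)) * ∑ i ∈ Finset.range m, g ((2*(i:ℝ)+1)/(2*(m:ℝ))))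
      atTop (nhds (∫ τ in Ioo (0:ℝ) 1, g τ)) := by
  set c : ℕ → ℝ := fun m => 1/(2*(m:ℝ)) with hc
  set d : ℕ → ℝ := fun m => 1 - 1/(2*(m:ℝ)) with hd
  set A : ℕ → ℝ := fun m => ∫ τ in Ioo (c m) (d m), g τ with hA
  set E : ℕ → ℝ := fun m => ∫ τ in Ioo 0 (c m), g τ with hE
  set E' : ℕ → ℝ := fun m => ∫ τ in Ioo (d m) 1, g τ with hE'
  set S : ℕ → ℝ :=
    fun m => (1/(m:ℝ)) * ∑ i ∈ Finset.range m, g ((2*(i:ℝ)+1)/(2*(m:ℝ))) with hS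
  have hc0 : Tendsto c atTop (nhds 0) := by
    have := tendsto_const_div_atTop_nhds_zero_nat (1/2 : ℝ)
    refine this.congr (fun n => ?_)
    simp only [hc]
    rw [div_div]
  -- the three integral limits
  have hcnn : ∀ m, 0 ≤ c m := fun m => by simp only [hc]; positivity
  have hc1 : ∀ m, c m ≤ 1 := by
    intro m
    simp only [hc]
    rcases Nat.eq_zero_or_pos m with h | h
    · simp [h]
    · have h1 : (1:ℝ) ≤ m := Nat.one_le_cast.mpr h
      rw [div_le_one (by linarith)]
      linarith
  have hd1 : ∀ m, d m ≤ 1 := fun m => by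
    simp only [hd]; have := hcnn m; simp only [hc] at this; linarith
  have hAlim : Tendsto A atTop (nhds (∫ τ in Ioo (0:ℝ) 1, g τ)) := by
    refine tendsto_int_indicator g g hInt _ (fun m => measurableSet_Ioo)
      (fun m τ hτ => ⟨(hcnn m).trans_lt hτ.1, hτ.2.trans_le (hd1 m)⟩) ?_
    intro τ hτ
    have h1 : ∀ᶠ m in atTop, c m < τ := hc0.eventually (eventually_lt_nhds hτ.1)
    have h2 : ∀ᶠ m in atTop, c m < 1 - τ :=
      hc0.eventually (eventually_lt_nhds (by linarith [hτ.2]))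
    refine Tendsto.congr' ?_ tendsto_const_nhds
    filter_upwards [h1, h2] with m hm1 hm2
    exact (indicator_of_mem (Set.mem_Ioo.mpr ⟨hm1, by simp only [hd]; linarith⟩) g).symm
  have hElim : Tendsto E atTop (nhds 0) := by
    have : Tendsto E atTop (nhds (∫ τ in Ioo (0:ℝ) 1, (0:ℝ))) := by
      refine tendsto_int_indicator g 0 hInt _ (fun m => measurableSet_Ioo)
        (fun m τ hτ => ⟨hτ.1, hτ.2.trans_le (hc1 m)⟩) ?_
      intro τ hτ
      have h1 : ∀ᶠ m in atTop, c m < τ := hc0.eventually (eventually_lt_nhds hτ.1)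
      refine Tendsto.congr' ?_ tendsto_const_nhds
      filter_upwards [h1] with m hm1
      exact (indicator_of_notMem (fun h => absurd h.2 (not_lt.mpr hm1.le)) g).symm
    simpa using this
  have hE'lim : Tendsto E' atTop (nhds 0) := by
    have : Tendsto E' atTop (nhds (∫ τ in Ioo (0:ℝ) 1, (0:ℝ))) := by
      refine tendsto_int_indicator g 0 hInt _ (fun m => measurableSet_Ioo)
        (fun m τ hτ => ⟨lt_of_le_of_lt (by
          have := hc1 m; simp only [hd]; linarith) hτ.1, hτ.2⟩) ?_
      intro τ hτ
      have h2 : ∀ᶠ m in atTop, c m < 1 - τ :=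
        hc0.eventually (eventually_lt_nhds (by linarith [hτ.2]))
      refine Tendsto.congr' ?_ tendsto_const_nhds
      filter_upwards [h2] with m hm2
      refine (indicator_of_notMem (fun h => ?_) g).symm
      have : d m < τ := h.1
      simp only [hd] at this
      linarith
    simpa using this
  have key : ∀ m : ℕ, 1 ≤ m → A m + 2 * E m ≤ S m ∧ S m ≤ A m + 2 * E' m := by
    intro m hm
    obtain ⟨n, rfl⟩ : ∃ n, m = n + 1 := ⟨m - 1, (Nat.succ_pred_eq_of_pos hm).symm⟩
    set M : ℝ := ((n + 1 : ℕ) : ℝ) with hMdef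
    have hM : (0:ℝ) < M := Nat.cast_pos.mpr n.succ_pos
    have hMeq : M = (n:ℝ) + 1 := by push_cast [hMdef]; ring
    set a : ℕ → ℝ := fun i => (2*(i:ℝ)+1)/(2*M) with ha
    have ha_mem : ∀ i ≤ n, a i ∈ Ioo (0:ℝ) 1 := by
      intro i hi
      have hin : (i:ℝ) ≤ n := Nat.cast_le.mpr hi
      constructor
      · simp only [ha]; positivity
      · simp only [ha]
        rw [div_lt_one (by positivity)]
        rw [hMeq]; linarith
    have hii : ∀ i ≤ n, ∀ j ≤ n, IntervalIntegrable g volume (a i) (a j) := by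
      intro i hi j hj
      exact (hInt.mono_set (ordConnected_Ioo.uIcc_subset (ha_mem i hi) (ha_mem j hj))).intervalIntegrable
    have hstep : ∀ i : ℕ, a (i+1) - a i = 1/M := by
      intro i
      have hM' : M ≠ 0 := ne_of_gt hM
      simp only [ha]
      push_cast
      rw [div_sub_div_same, show (2*((i:ℝ)+1)+1) - (2*(i:ℝ)+1) = 2 by ring]
      rw [div_eq_div_iff (by positivity) hM.ne']
      ring
    have hle : ∀ i : ℕ, a i ≤ a (i+1) := by
      intro i
      have := hstep i
      have h2 : (0:ℝ) < 1/M := by positivity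
      linarith
    have piece_le : ∀ k, k < n → ∫ τ in a k..a (k+1), g τ ≤ (1/M) * g (a (k+1)) := by
      intro k hk
      have h1 : ∫ τ in a k..a (k+1), g τ ≤ ∫ τ in a k..a (k+1), g (a (k+1)) := by
        refine intervalIntegral.integral_mono_on (hle k) (hii k (by omega) (k+1) (by omega))
          intervalIntegrable_const (fun τ hτ => ?_)
        exact hmono ⟨lt_of_lt_of_le (ha_mem k (by omega)).1 hτ.1,
          lt_of_le_of_lt hτ.2 (ha_mem (k+1) (by omega)).2⟩ (ha_mem (k+1) (by omega)) hτ.2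
      rwa [intervalIntegral.integral_const, hstep k, smul_eq_mul] at h1
    have piece_ge : ∀ k, k < n → (1/M) * g (a k) ≤ ∫ τ in a k..a (k+1), g τ := by
      intro k hk
      have h1 : ∫ τ in a k..a (k+1), g (a k) ≤ ∫ τ in a k..a (k+1), g τ := by
        refine intervalIntegral.integral_mono_on (hle k) intervalIntegrable_const
          (hii k (by omega) (k+1) (by omega)) (fun τ hτ => ?_)
        exact hmono (ha_mem k (by omega)) ⟨lt_of_lt_of_le (ha_mem k (by omega)).1 hτ.1,
          lt_of_le_of_lt hτ.2 (ha_mem (k+1) (by omega)).2⟩ hτ.1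
      rwa [intervalIntegral.integral_const, hstep k, smul_eq_mul] at h1
    have hsum : ∑ k ∈ Finset.range n, ∫ τ in a k..a (k+1), g τ = ∫ τ in (a 0)..(a n), g τ :=
      intervalIntegral.sum_integral_adjacent_intervals
        (fun k hk => hii k (by omega) (k+1) (by omega))
    have ha0 : a 0 = c (n+1) := by simp only [ha, hc, hMdef]; norm_num
    have han : a n = d (n+1) := by
      simp only [ha, hd, hMdef]
      rw [hMdef] at hM
      field_simp
      push_cast
      ring
    have hAeq : A (n+1) = ∫ τ in (a 0)..(a n), g τ := by
      have h0n : a 0 ≤ a n := (monotone_nat_of_le_succ hle) (Nat.zero_le n)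
      rw [intervalIntegral.integral_of_le h0n, integral_Ioc_eq_integral_Ioo]
      simp only [hA]
      rw [← ha0, ← han]
    -- lower bound on g(a 0)/M via E
    have hE_le : 2 * E (n+1) ≤ (1/M) * g (a 0) := by
      have hsub0 : Ioo (0:ℝ) (a 0) ⊆ Ioo (0:ℝ) 1 :=
        fun τ hτ => ⟨hτ.1, hτ.2.trans (ha_mem 0 (by omega)).2⟩
      have h1 : ∫ τ in Ioo (0:ℝ) (a 0), g τ ≤ ∫ τ in Ioo (0:ℝ) (a 0), g (a 0) := by
        refine setIntegral_mono_on (hInt.mono_set hsub0)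
          (integrableOn_const measure_Ioo_lt_top.ne) measurableSet_Ioo
          (fun τ hτ => hmono (hsub0 hτ) (ha_mem 0 (by omega)) hτ.2.le)
      rw [setIntegral_const, Real.volume_real_Ioo_of_le (ha_mem 0 (by omega)).1.le, sub_zero,
        smul_eq_mul] at h1
      have ha0v : a 0 = 1/(2*M) := by simp only [ha]; norm_num
      have hEv : E (n+1) = ∫ τ in Ioo (0:ℝ) (a 0), g τ := by
        simp only [hE]; rw [← ha0]
      have h2 : 2 * a 0 = 1/M := by
        rw [ha0v]; field_simp
      calc 2 * E (n+1) ≤ 2 * (a 0 * g (a 0)) := by rw [hEv]; linarith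
        _ = (2 * a 0) * g (a 0) := by ring
        _ = (1/M) * g (a 0) := by rw [h2]
    have hE'_le : (1/M) * g (a n) ≤ 2 * E' (n+1) := by
      have hsubn : Ioo (a n) 1 ⊆ Ioo (0:ℝ) 1 :=
        fun τ hτ => ⟨(ha_mem n le_rfl).1.trans hτ.1, hτ.2⟩
      have h1 : ∫ τ in Ioo (a n) 1, g (a n) ≤ ∫ τ in Ioo (a n) 1, g τ := by
        refine setIntegral_mono_on (integrableOn_const measure_Ioo_lt_top.ne)
          (hInt.mono_set hsubn) measurableSet_Ioo
          (fun τ hτ => hmono (ha_mem n le_rfl) (hsubn hτ) hτ.1.le)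
      rw [setIntegral_const,
        Real.volume_real_Ioo_of_le (by linarith [(ha_mem n le_rfl).2]), smul_eq_mul] at h1
      have hanv : (1:ℝ) - a n = 1/(2*M) := by
        simp only [ha, hMeq]
        field_simp
        ring
      have hE'v : E' (n+1) = ∫ τ in Ioo (a n) 1, g τ := by
        simp only [hE']; rw [← han]
      have h2 : 2 * ((1:ℝ) - a n) = 1/M := by
        rw [hanv]; field_simp
      calc (1/M) * g (a n) = (2 * (1 - a n)) * g (a n) := by rw [h2]
        _ = 2 * ((1 - a n) * g (a n)) := by ring
        _ ≤ 2 * E' (n+1) := by rw [hE'v]; linarith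
    have hSeq : S (n+1) = (1/M) * ∑ i ∈ Finset.range (n+1), g (a i) := rfl
    constructor
    · -- lower bound
      have hdecomp : S (n+1) =
          (∑ k ∈ Finset.range n, (1/M) * g (a (k+1))) + (1/M) * g (a 0) := by
        rw [hSeq, Finset.sum_range_succ', mul_add, Finset.mul_sum]
      have hsumge : ∫ τ in (a 0)..(a n), g τ ≤ ∑ k ∈ Finset.range n, (1/M) * g (a (k+1)) := by
        rw [← hsum]
        exact Finset.sum_le_sum (fun k hk => piece_le k (Finset.mem_range.mp hk))
      rw [hdecomp, hAeq]
      linarith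
    · have hdecomp : S (n+1) =
          (∑ k ∈ Finset.range n, (1/M) * g (a k)) + (1/M) * g (a n) := by
        rw [hSeq, Finset.sum_range_succ, mul_add, Finset.mul_sum]
      have hsumle : ∑ k ∈ Finset.range n, (1/M) * g (a k) ≤ ∫ τ in (a 0)..(a n), g τ := by
        rw [← hsum]
        exact Finset.sum_le_sum (fun k hk => piece_ge k (Finset.mem_range.mp hk))
      rw [hdecomp, hAeq]
      linarith
  have hlow : ∀ᶠ m in atTop, A m + 2 * E m ≤ S m := by
    filter_upwards [eventually_ge_atTop 1] with m hm
    exact (key m hm).1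
  have hup : ∀ᶠ m in atTop, S m ≤ A m + 2 * E' m := by
    filter_upwards [eventually_ge_atTop 1] with m hm
    exact (key m hm).2
  have l1 : Tendsto (fun m => A m + 2 * E m) atTop
      (nhds ((∫ τ in Ioo (0:ℝ) 1, g τ) + 2 * 0)) := hAlim.add (hElim.const_mul 2)
  have l2 : Tendsto (fun m => A m + 2 * E' m) atTop
      (nhds ((∫ τ in Ioo (0:ℝ) 1, g τ) + 2 * 0)) := hAlim.add (hE'lim.const_mul 2)
  rw [mul_zero, add_zero] at l1 l2
  exact tendsto_of_tendsto_of_tendsto_of_le_of_le' l1 l2 hlow hup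

end AuxQuantile

section
open Set ProbabilityTheory

/-- If for each `m` the quantile estimates `θ m i t` converge (as `t → ∞`) to the
`τ_i^{(m)} = (2i−1)/(2m)` quantiles of a Borel probability measure `μ` with finite first
moment, then the average-reward estimates `R̄ m t = (1/m) ∑ i, θ m i t` satisfy
`lim_{m→∞} lim_{t→∞} R̄ m t = ∫ x ∂μ`. -/
theorem averageReward_estimate_double_limit
    (μ : Measure ℝ) [IsProbabilityMeasure μ]
    (hint : Integrable (fun x : ℝ => x) μ)
    (F : ℝ → ℝ) (hF : F = fun x => (μ (Set.Iic x)).toReal)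
    (Finv : ℝ → ℝ) (hFinv : ∀ τ : ℝ, Finv τ = sInf {x : ℝ | τ ≤ F x})
    (θ : ℕ → ℕ → ℕ → ℝ)
    (hθ : ∀ m : ℕ, 1 ≤ m → ∀ i ∈ Finset.range m,
      Tendsto (fun t => θ m i t) atTop
        (nhds (Finv ((2 * (i : ℝ) + 1) / (2 * m)))))
    (Rbar : ℕ → ℕ → ℝ)
    (hRbar : ∀ m t, Rbar m t = (1 / (m : ℝ)) * ∑ i ∈ Finset.range m, θ m i t) :
    ∃ Lm : ℕ → ℝ,
      (∀ m : ℕ, 1 ≤ m → Tendsto (fun t => Rbar m t) atTop (nhds (Lm m))) ∧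
      Tendsto Lm atTop (nhds (∫ x, x ∂μ)) := by
  have hgal := quantile_galois μ F hF Finv hFinv
  have hmono := quantile_mono F Finv hgal
  have hmap := quantile_map μ F hF Finv hgal
  have hmeas : AEMeasurable Finv (volume.restrict (Ioo (0:ℝ) 1)) :=
    aemeasurable_restrict_of_monotoneOn measurableSet_Ioo hmono
  have hInt : IntegrableOn Finv (Ioo (0:ℝ) 1) := by
    rw [← hmap] at hint
    exact (integrable_map_measure measurable_id.aestronglyMeasurable hmeas).mp hint
  have hval : ∫ x, x ∂μ = ∫ τ in Ioo (0:ℝ) 1, Finv τ := by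
    rw [← hmap]
    exact integral_map hmeas (f := fun x : ℝ => x) measurable_id.aestronglyMeasurable
  refine ⟨fun m => (1/(m:ℝ)) * ∑ i ∈ Finset.range m, Finv ((2*(i:ℝ)+1)/(2*(m:ℝ))),
    fun m hm => ?_, ?_⟩
  · have := tendsto_finset_sum (Finset.range m) (fun i hi => hθ m hm i hi)
    have h2 := this.const_mul (1/(m:ℝ))
    refine h2.congr (fun t => ?_)
    rw [hRbar]
  · rw [hval]
    exact riemann_midpoint Finv hmono hInt

end
end

section
/- Let F be the CDF of a Borel probability measure on ℝ, fix m ≥ 1, set τ_i = (2i−1)/(2m), and define the set-valued map H : ℝᵐ ⇒ ℝᵐ by H(θ) = {h ∈ ℝᵐ : for every i, h_i = τ_i − p_i for some p_i ∈ [F(θ_i⁻), F(θ_i)]}, where F(θ_i⁻) is the left limit of F at θ_i. Then the graph of H is closed: if (θ^k, h^k) → (θ, h) in ℝᵐ × ℝᵐ with h^k ∈ H(θ^k) for all k, then h ∈ H(θ). -/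
open MeasureTheory Filter

lemma stieltjes_seq_Icc (f : StieltjesFunction ℝ) (θseq : ℕ → ℝ) (a : ℕ → ℝ) (θ x : ℝ)
    (hθ : Tendsto θseq atTop (nhds θ)) (ha : Tendsto a atTop (nhds x))
    (hlb : ∀ k, Function.leftLim f (θseq k) ≤ a k) (hub : ∀ k, a k ≤ f (θseq k)) :
    x ∈ Set.Icc (Function.leftLim (f : ℝ → ℝ) θ) (f θ) := by
  constructor
  · -- leftLim f θ ≤ x
    have key : ∀ y < θ, f y ≤ x := by
      intro y hy
      have hev : ∀ᶠ k in atTop, f y ≤ a k := by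
        filter_upwards [hθ.eventually (eventually_gt_nhds hy)] with k hk
        exact (f.mono.le_leftLim hk).trans (hlb k)
      exact ge_of_tendsto ha hev
    have := f.mono.tendsto_leftLim θ
    refine le_of_tendsto this ?_
    filter_upwards [self_mem_nhdsWithin] with y hy using key y hy
  · -- x ≤ f θ
    refine le_of_forall_pos_le_add (fun ε hε => ?_)
    have hrc : Tendsto f (nhdsWithin θ (Set.Ici θ)) (nhds (f θ)) := f.right_continuous θ
    have hset : ∀ᶠ y in nhdsWithin θ (Set.Ici θ), f y < f θ + ε :=
      hrc.eventually (eventually_lt_nhds (by linarith))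
    obtain ⟨u, hu, hsub⟩ := mem_nhdsGE_iff_exists_Ico_subset.mp hset
    obtain ⟨z, hz1, hz2⟩ := exists_between (Set.mem_Ioi.mp hu)
    have hfz : f z < f θ + ε := hsub ⟨hz1.le, hz2⟩
    have hev : ∀ᶠ k in atTop, a k ≤ f z := by
      filter_upwards [hθ.eventually (eventually_lt_nhds hz1)] with k hk
      exact (hub k).trans (f.mono hk.le)
    exact (le_of_tendsto ha hev).trans hfz.le

/-- The graph of the set-valued map `H(θ) = {h : ∀ i, h i ∈ τ_i − [F(θ_i⁻), F(θ_i)]}`,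
built from the CDF `F` of a Borel probability measure on `ℝ`, is closed. -/
theorem quantile_marchaud_graph_closed
    (μ : Measure ℝ) [IsProbabilityMeasure μ]
    (F : ℝ → ℝ) (hF : F = fun x => (μ (Set.Iic x)).toReal)
    (m : ℕ) (hm : 1 ≤ m)
    (τ : Fin m → ℝ) (hτ : ∀ i : Fin m, τ i = (2 * (i : ℝ) + 1) / (2 * m))
    (H : (Fin m → ℝ) → Set (Fin m → ℝ))
    (hH : ∀ θ : Fin m → ℝ, H θ =
      {h | ∀ i : Fin m,
        ∃ p ∈ Set.Icc (Function.leftLim F (θ i)) (F (θ i)), h i = τ i - p})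
    (θseq hseq : ℕ → (Fin m → ℝ)) (θ h : Fin m → ℝ)
    (hmem : ∀ k : ℕ, hseq k ∈ H (θseq k))
    (hθlim : Tendsto θseq atTop (nhds θ))
    (hhlim : Tendsto hseq atTop (nhds h)) :
    h ∈ H θ := by
  have hFc : F = (ProbabilityTheory.cdf μ : ℝ → ℝ) := by
    ext x; rw [hF]; exact ((ProbabilityTheory.cdf_eq_real μ x).trans rfl).symm
  subst hFc
  simp only [hH, Set.mem_setOf_eq] at hmem ⊢
  intro i
  set f := ProbabilityTheory.cdf μ
  have hθi : Tendsto (fun k => θseq k i) atTop (nhds (θ i)) :=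
    ((continuous_apply i).tendsto θ).comp hθlim
  have hai : Tendsto (fun k => τ i - hseq k i) atTop (nhds (τ i - h i)) :=
    tendsto_const_nhds.sub (((continuous_apply i).tendsto h).comp hhlim)
  have hlb : ∀ k, Function.leftLim (f : ℝ → ℝ) (θseq k i) ≤ τ i - hseq k i := by
    intro k
    obtain ⟨p, hp, heq⟩ := hmem k i
    have : p = τ i - hseq k i := by linarith
    linarith [hp.1]
  have hub : ∀ k, τ i - hseq k i ≤ f (θseq k i) := by
    intro k
    obtain ⟨p, hp, heq⟩ := hmem k i
    have : p = τ i - hseq k i := by linarith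
    linarith [hp.2]
  have := stieltjes_seq_Icc f (fun k => θseq k i) (fun k => τ i - hseq k i) (θ i) (τ i - h i)
    hθi hai hlb hub
  exact ⟨τ i - h i, this, by ring⟩
end

section
/- Let τ ∈ (0,1) and let {θ_t}_{t≥0}, {R_t}_{t≥0}, {α_t}_{t≥0} be real sequences satisfying the quantile update θ_{t+1} = θ_t + α_t(τ − 1{R_t < θ_t}) for all t ≥ 0. Suppose the rewards are bounded, R_min ≤ R_t ≤ R_max for all t for some finite R_min, R_max, and the step sizes satisfy α_t > 0, sup_{t≥0} α_t < ∞, and ∑_{t=0}^∞ α_t = ∞. Then the sequence of quantile estimates is bounded: sup_{t≥0} |θ_t| < ∞. -/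
open Filter

/-- Boundedness of the per-step reward quantile estimates: if the rewards are bounded and
the positive step sizes are bounded with divergent sum, then the quantile-regression
iterates `θ_{t+1} = θ_t + α_t (τ − 1{R_t < θ_t})` remain bounded. -/
theorem quantile_estimates_bounded
    (τ : ℝ) (hτ : τ ∈ Set.Ioo (0 : ℝ) 1)
    (θ R α : ℕ → ℝ)
    (hupd : ∀ t : ℕ, θ (t + 1) = θ t + α t * (τ - if R t < θ t then 1 else 0))
    (Rmin Rmax : ℝ) (hRbound : ∀ t : ℕ, Rmin ≤ R t ∧ R t ≤ Rmax)
    (hαpos : ∀ t : ℕ, 0 < α t)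
    (hαbdd : ∃ C : ℝ, ∀ t : ℕ, α t ≤ C)
    (hαsum : Tendsto (fun n : ℕ => ∑ t ∈ Finset.range n, α t) atTop atTop) :
    ∃ B : ℝ, ∀ t : ℕ, |θ t| ≤ B := by
  obtain ⟨C, hC⟩ := hαbdd
  have hC0 : 0 < C := lt_of_lt_of_le (hαpos 0) (hC 0)
  obtain ⟨hτ0, hτ1⟩ := hτ
  have hub : ∀ t, θ t ≤ max (θ 0) (Rmax + C) := by
    intro t
    induction t with
    | zero => exact le_max_left _ _
    | succ t ih =>
      rw [hupd t]
      by_cases h : R t < θ t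
      · simp only [if_pos h]
        have hα := hαpos t
        nlinarith
      · simp only [if_neg h]
        have h1 : θ t ≤ Rmax := le_trans (not_lt.mp h) (hRbound t).2
        have hα := hαpos t
        have hαC := hC t
        have : α t * (τ - 0) ≤ C := by nlinarith
        have : θ t + α t * (τ - 0) ≤ Rmax + C := by linarith
        exact le_trans this (le_max_right _ _)
  have hlb : ∀ t, min (θ 0) (Rmin - C) ≤ θ t := by
    intro t
    induction t with
    | zero => exact min_le_left _ _
    | succ t ih =>
      rw [hupd t]
      by_cases h : R t < θ t
      · simp only [if_pos h]
        have h1 : Rmin < θ t := lt_of_le_of_lt (hRbound t).1 h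
        have hα := hαpos t
        have hαC := hC t
        have : -C ≤ α t * (τ - 1) := by nlinarith
        have : Rmin - C ≤ θ t + α t * (τ - 1) := by linarith
        exact le_trans (min_le_right _ _) this
      · simp only [if_neg h]
        have hα := hαpos t
        nlinarith
  refine ⟨max (max (θ 0) (Rmax + C)) (-(min (θ 0) (Rmin - C))), fun t => abs_le.mpr ⟨?_, ?_⟩⟩
  · have := hlb t
    have h2 : -max (max (θ 0) (Rmax + C)) (-(min (θ 0) (Rmin - C))) ≤ min (θ 0) (Rmin - C) := by
      have := le_max_right (max (θ 0) (Rmax + C)) (-(min (θ 0) (Rmin - C)))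
      linarith
    linarith
  · exact le_trans (hub t) (le_max_left _ _)
end

section
/- Let τ ∈ (0,1) and let {θ_t}, {R_t}, {α_t} be real sequences with θ_{t+1} = θ_t + α_t(τ − 1{R_t < θ_t}), R_t ≤ R_max for all t, α_t > 0, and ∑_{t=0}^∞ α_t = ∞. Then the quantile estimates cannot remain above R_max forever: for every T ≥ 0 there exists t ≥ T with θ_t ≤ R_max. -/
open Filter

/-- The quantile estimates cannot remain above `R_max` forever: with positive step sizes
of divergent sum and rewards bounded above by `R_max`, for every `T` there is a `t ≥ T`
with `θ_t ≤ R_max`. -/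
theorem quantile_estimates_return_below_Rmax
    (τ : ℝ) (hτ : τ ∈ Set.Ioo (0 : ℝ) 1)
    (θ R α : ℕ → ℝ)
    (hupd : ∀ t : ℕ, θ (t + 1) = θ t + α t * (τ - if R t < θ t then 1 else 0))
    (Rmax : ℝ) (hRbound : ∀ t : ℕ, R t ≤ Rmax)
    (hαpos : ∀ t : ℕ, 0 < α t)
    (hαsum : Tendsto (fun n : ℕ => ∑ t ∈ Finset.range n, α t) atTop atTop) :
    ∀ T : ℕ, ∃ t : ℕ, T ≤ t ∧ θ t ≤ Rmax := by
  intro T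
  by_contra h
  push_neg at h
  -- h : ∀ t, T ≤ t → Rmax < θ t
  have key : ∀ n : ℕ, θ (T + n) = θ T - (1 - τ) * ∑ t ∈ Finset.range n, α (T + t) := by
    intro n
    induction n with
    | zero => simp
    | succ n ih =>
      have hgt : Rmax < θ (T + n) := h _ (Nat.le_add_right T n)
      have hR : R (T + n) < θ (T + n) := lt_of_le_of_lt (hRbound _) hgt
      have := hupd (T + n)
      rw [if_pos hR] at this
      have : θ (T + n + 1) = θ (T + n) - α (T + n) * (1 - τ) := by
        rw [this]; ring
      rw [show T + (n + 1) = T + n + 1 from rfl, this, ih,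
        Finset.sum_range_succ]
      ring
  -- tail sums diverge
  have htail : Tendsto (fun n : ℕ => ∑ t ∈ Finset.range n, α (T + t)) atTop atTop := by
    have hshift : Tendsto (fun n : ℕ => ∑ t ∈ Finset.range (T + n), α t) atTop atTop := by
      have := hαsum.comp (tendsto_add_atTop_nat T)
      simpa [Function.comp_def, Nat.add_comm] using this
    have heq : ∀ n : ℕ, ∑ t ∈ Finset.range n, α (T + t)
        = ∑ t ∈ Finset.range (T + n), α t - ∑ t ∈ Finset.range T, α t := by
      intro n
      rw [Finset.sum_range_add]
      ring
    simp only [heq]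
    exact hshift.atTop_add tendsto_const_nhds
  have h1τ : 0 < 1 - τ := by linarith [hτ.2]
  obtain ⟨n, hn⟩ := (htail.eventually_ge_atTop ((θ T - Rmax) / (1 - τ))).exists
  have hgt : Rmax < θ (T + n) := h _ (Nat.le_add_right T n)
  rw [key n] at hgt
  have : (θ T - Rmax) / (1 - τ) * (1 - τ) ≤ (∑ t ∈ Finset.range n, α (T + t)) * (1 - τ) := by
    exact mul_le_mul_of_nonneg_right hn (le_of_lt h1τ)
  rw [div_mul_cancel₀ _ (ne_of_gt h1τ)] at this
  nlinarith
end
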